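/- arXiv:2509.05473 — 3 statements merged into one kernel-verified Lean document; each statement's English description precedes it below -/
import Mathlib

section
/- For any odd prime p and any real X ≥ 1, the sum of the Legendre symbol (-D/p) over all fundamental discriminants -D with X ≤ D ≤ 2X is O(p √X); more precisely its absolute value is at most 32 p √X. -/
/-- A negative fundamental discriminant is either `-d` with `d` squarefree and
`-d ≡ 1 (mod 4)`, or `-4d` with `d` squarefree and `-d ≡ 2, 3 (mod 4)`. -/
def IsFundamentalDiscriminant (n : ℤ) : Prop :=
  (Squarefree n ∧ n % 4 = 1) ∨
    (∃ d : ℤ, n = 4 * d ∧ Squarefree d ∧ (d % 4 = 2 ∨ d % 4 = 3))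

/-!
Since `(-D/p) = (-1/p) (D/p)`, and `-D` is a negative fundamental discriminant exactly when
either `D ≡ 3 (mod 4)` is squarefree or `D = 4e` with `e ≡ 1, 2 (mod 4)` squarefree, and since
`(4e/p) = (e/p)`, the sum is `(-1/p)` times three sums of `(n/p)` over squarefree `n ≤ 2X` in a
class `r ≢ 0 (mod 4)`. Detect squarefreeness by `∑_{k² ∣ n} μ(k)` and swap the sums. For each
`k ≤ √(2X)` the inner sum runs over `n = k²m`, so `k` is odd and it equals `(k²/p)` times a
partial sum of `m ↦ [m ≡ r (mod 4)] (m/p)`. That function is `4p`-periodic with vanishing sum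
over a period, hence its partial sums are bounded by `4p`. Altogether the sum is at most
`12 p √(2X) ≤ 32 p √X`.
-/

open Finset ArithmeticFunction
open scoped ArithmeticFunction.Moebius

theorem Nat.dvd_of_sq_dvd_sq_mul_of_squarefree {a b d : ℕ} (ha : Squarefree a)
    (h : d ^ 2 ∣ b ^ 2 * a) : d ∣ b := by
  rcases Nat.eq_zero_or_pos b with rfl | hb
  · exact dvd_zero d
  obtain ⟨g, d', b', hg, hcop, rfl, rfl⟩ := Nat.exists_coprime' (Nat.gcd_pos_of_pos_right d hb)
  have h' : d' ^ 2 ∣ b' ^ 2 * a := by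
    refine Nat.dvd_of_mul_dvd_mul_right (pow_pos hg 2) ?_
    convert h using 1 <;> ring
  have hd' : d' = 1 :=
    Nat.isUnit_iff.mp (ha d' (by simpa [sq] using (hcop.pow 2 2).dvd_of_dvd_mul_left h'))
  simp [hd']

theorem ArithmeticFunction.sum_moebius_sq_dvd {n : ℕ} (hn : n ≠ 0) :
    ∑ k ∈ n.divisors with k ^ 2 ∣ n, μ k = if Squarefree n then 1 else 0 := by
  obtain ⟨a, b, rfl, ha⟩ := Nat.sq_mul_squarefree n
  have hb : b ≠ 0 := by rintro rfl; simp at hn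
  have hdivisors : {k ∈ (b ^ 2 * a).divisors | k ^ 2 ∣ b ^ 2 * a} = b.divisors := by
    ext k
    simp only [mem_filter, Nat.mem_divisors]
    constructor
    · rintro ⟨-, hk⟩
      exact ⟨Nat.dvd_of_sq_dvd_sq_mul_of_squarefree ha hk, hb⟩
    · rintro ⟨hk, -⟩
      have hk2 : k ^ 2 ∣ b ^ 2 * a := (pow_dvd_pow_of_dvd hk 2).mul_right a
      exact ⟨⟨(dvd_pow_self k two_ne_zero).trans hk2, hn⟩, hk2⟩
  have hsquarefree : Squarefree (b ^ 2 * a) ↔ b = 1 :=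
    ⟨fun h ↦ Nat.isUnit_iff.mp (h b (Dvd.intro a (by ring))), fun h ↦ by simpa [h] using ha⟩
  rw [hdivisors, ← coe_mul_zeta_apply, moebius_mul_coe_zeta, one_apply,
    if_congr hsquarefree rfl rfl]

theorem Finset.sum_Icc_filter_dvd {M : Type*} [AddCommMonoid M] (f : ℕ → M) {k : ℕ}
    (hk : 0 < k) (L U : ℕ) :
    ∑ n ∈ Icc L U with k ∣ n, f n = ∑ m ∈ Icc ((L + k - 1) / k) (U / k), f (k * m) := by
  have hmem (m : ℕ) : m ∈ Icc ((L + k - 1) / k) (U / k) ↔ k * m ∈ Icc L U := by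
    simp only [mem_Icc, Nat.div_le_iff_le_mul_add_pred hk, Nat.le_div_iff_mul_le hk, mul_comm m]
    omega
  have himage : {n ∈ Icc L U | k ∣ n} = (Icc ((L + k - 1) / k) (U / k)).image (k * ·) := by
    ext n
    simp only [mem_filter, mem_image, hmem]
    constructor
    · rintro ⟨hn, m, rfl⟩
      exact ⟨m, hn, rfl⟩
    · rintro ⟨m, hm, rfl⟩
      exact ⟨hm, dvd_mul_right k m⟩
  rw [himage, sum_image fun _ _ _ _ h ↦ Nat.eq_of_mul_eq_mul_left hk h]

theorem abs_sum_Icc_filter_squarefree_le {f : ℕ → ℤ} {C : ℤ}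
    (hf : ∀ k, 0 < k → ∀ A B, |∑ m ∈ Icc A B, f (k ^ 2 * m)| ≤ C) {L : ℕ} (hL : 0 < L)
    (U : ℕ) :
    |∑ n ∈ Icc L U with Squarefree n, f n| ≤ Nat.sqrt U * C := by
  have hsieve : ∀ n ∈ Icc L U, (if Squarefree n then f n else 0) =
      ∑ k ∈ Icc 1 (Nat.sqrt U), if k ^ 2 ∣ n then μ k * f n else 0 := by
    intro n hn
    rw [mem_Icc] at hn
    have hdivisors : {k ∈ Icc 1 (Nat.sqrt U) | k ^ 2 ∣ n} = {k ∈ n.divisors | k ^ 2 ∣ n} := by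
      ext k
      simp only [mem_filter, mem_Icc, Nat.mem_divisors, Nat.le_sqrt']
      constructor
      · rintro ⟨-, hk⟩
        exact ⟨⟨(dvd_pow_self k two_ne_zero).trans hk, by omega⟩, hk⟩
      · rintro ⟨⟨-, hn0⟩, hk⟩
        have hk0 : 0 < k := Nat.pos_of_ne_zero (by rintro rfl; simp at hk; omega)
        exact ⟨⟨hk0, (Nat.le_of_dvd (by omega) hk).trans hn.2⟩, hk⟩
    rw [← sum_filter, ← sum_mul, hdivisors, sum_moebius_sq_dvd (by omega), ite_mul, one_mul,
      zero_mul]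
  calc |∑ n ∈ Icc L U with Squarefree n, f n|
      = |∑ k ∈ Icc 1 (Nat.sqrt U),
          μ k * ∑ m ∈ Icc ((L + k ^ 2 - 1) / k ^ 2) (U / k ^ 2), f (k ^ 2 * m)| := by
        rw [sum_filter, sum_congr rfl hsieve, sum_comm]
        congr 1
        refine sum_congr rfl fun k hk ↦ ?_
        rw [← sum_Icc_filter_dvd f (pow_pos (by simp at hk; omega) 2), mul_sum, sum_filter]
    _ ≤ ∑ k ∈ Icc 1 (Nat.sqrt U),
          |μ k| * |∑ m ∈ Icc ((L + k ^ 2 - 1) / k ^ 2) (U / k ^ 2), f (k ^ 2 * m)| := by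
        simpa only [abs_mul] using abs_sum_le_sum_abs (fun k ↦ μ k * _) _
    _ ≤ ∑ k ∈ Icc 1 (Nat.sqrt U), C := by
        refine sum_le_sum fun k hk ↦ ?_
        have hk : 0 < k := by simp at hk; omega
        calc |μ k| * _ ≤ 1 * C :=
              mul_le_mul abs_moebius_le_one (hf k hk _ _) (abs_nonneg _) zero_le_one
          _ = C := one_mul C
    _ = Nat.sqrt U * C := by simp

theorem Function.Periodic.sum_Ico_add_eq_sum_range {M : Type*} [AddCommMonoid M] {f : ℕ → M}
    {P : ℕ} (hf : Function.Periodic f P) (A : ℕ) :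
    ∑ n ∈ Ico A (A + P), f n = ∑ n ∈ range P, f n := by
  rw [sum_eq_multiset_sum, sum_eq_multiset_sum, range_val, ← Nat.multiset_Ico_map_mod A P,
    Multiset.map_map]
  exact congrArg Multiset.sum (Multiset.map_congr rfl fun n _ ↦ (hf.map_mod_nat n).symm)

theorem Function.Periodic.abs_sum_Ico_le {R : Type*} [Ring R] [LinearOrder R]
    [IsStrictOrderedRing R] {f : ℕ → R} {P : ℕ} (hf : Function.Periodic f P) (hP : 0 < P)
    (hsum : ∑ n ∈ range P, f n = 0) (hbound : ∀ n, |f n| ≤ 1) (A B : ℕ) :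
    |∑ n ∈ Ico A B, f n| ≤ P := by
  induction B using Nat.strong_induction_on with
  | _ B ih =>
  by_cases hB : B ≤ A + P
  · calc |∑ n ∈ Ico A B, f n| ≤ ∑ n ∈ Ico A B, |f n| := abs_sum_le_sum_abs _ _
      _ ≤ #(Ico A B) • (1 : R) := sum_le_card_nsmul _ _ _ fun n _ ↦ hbound n
      _ ≤ P := by rw [nsmul_one, Nat.card_Ico]; exact_mod_cast (by omega)
  · obtain ⟨C, rfl⟩ : ∃ C, B = C + P := ⟨B - P, by omega⟩
    rw [← sum_Ico_consecutive f (by omega : A ≤ C) (by omega : C ≤ C + P),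
      hf.sum_Ico_add_eq_sum_range, hsum, add_zero]
    exact ih C (by omega)

section Legendre

variable (p : ℕ) [Fact p.Prime]

theorem legendreSym.abs_le_one (a : ℤ) : |legendreSym p a| ≤ 1 := by
  by_cases ha : (a : ZMod p) = 0
  · simp [(legendreSym.eq_zero_iff p a).mpr ha]
  · rcases legendreSym.eq_one_or_neg_one p ha with h | h <;> simp [h]

theorem legendreSym.sum_range_add_mul_eq_zero (hp : p ≠ 2) (c a : ℤ) (ha : (a : ZMod p) ≠ 0) :
    ∑ t ∈ range p, legendreSym p (c + a * t) = 0 := by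
  let e : ZMod p ≃ ZMod p := (Equiv.mulLeft₀ _ ha).trans (Equiv.addLeft (c : ZMod p))
  calc ∑ t ∈ range p, legendreSym p (c + a * t)
      = ∑ x : ZMod p, quadraticChar (ZMod p) (e x) := by
        refine sum_nbij' (fun t ↦ (t : ZMod p)) ZMod.val (by simp)
          (fun x _ ↦ by simp [ZMod.val_lt]) (fun t ht ↦ ZMod.val_cast_of_lt (mem_range.mp ht))
          (fun x _ ↦ ZMod.natCast_zmod_val x) fun t _ ↦ by simp [e, legendreSym]
    _ = ∑ x : ZMod p, quadraticChar (ZMod p) x := e.sum_comp (quadraticChar (ZMod p))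
    _ = 0 := quadraticChar_sum_zero (by rwa [ZMod.ringChar_zmod_n])

def legendreSymOnClass (q r n : ℕ) : ℤ := if n % q = r then legendreSym p n else 0

variable {p}

theorem legendreSymOnClass_periodic (q r : ℕ) :
    Function.Periodic (legendreSymOnClass p q r) (q * p) := fun n ↦ by
  simp [legendreSymOnClass, legendreSym]

theorem sum_range_legendreSymOnClass (hp : p ≠ 2) {q r : ℕ} (hq : (q : ZMod p) ≠ 0)
    (hr : r < q) : ∑ n ∈ range (q * p), legendreSymOnClass p q r n = 0 := by
  have himage : {n ∈ range (q * p) | n % q = r} = (range p).image (r + q * ·) := by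
    ext n
    simp only [mem_filter, mem_range, mem_image]
    constructor
    · rintro ⟨hn, rfl⟩
      exact ⟨n / q, Nat.div_lt_of_lt_mul hn, Nat.mod_add_div n q⟩
    · rintro ⟨t, ht, rfl⟩
      exact ⟨by nlinarith, by simp [Nat.add_mul_mod_self_left, Nat.mod_eq_of_lt hr]⟩
  simp only [legendreSymOnClass]
  rw [← sum_filter, himage,
    sum_image fun _ _ _ _ h ↦ Nat.eq_of_mul_eq_mul_left (by omega) (Nat.add_left_cancel h)]
  simpa using legendreSym.sum_range_add_mul_eq_zero p hp r q (by exact_mod_cast hq)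

theorem abs_sum_Ico_legendreSymOnClass_le (hp : p ≠ 2) {q r : ℕ} (hq : (q : ZMod p) ≠ 0)
    (hr : r < q) (A B : ℕ) : |∑ n ∈ Ico A B, legendreSymOnClass p q r n| ≤ q * p := by
  exact_mod_cast (legendreSymOnClass_periodic q r).abs_sum_Ico_le
    (Nat.mul_pos (by omega) (Fact.out : p.Prime).pos) (sum_range_legendreSymOnClass hp hq hr)
    (fun n ↦ by unfold legendreSymOnClass; split_ifs <;> simp [legendreSym.abs_le_one]) A B

theorem legendreSymOnClass_four_sq_mul_of_even {r k : ℕ} (hr : r ≠ 0) (hk : Even k) (m : ℕ) :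
    legendreSymOnClass p 4 r (k ^ 2 * m) = 0 := by
  obtain ⟨j, rfl⟩ := hk
  have hmod : (j + j) ^ 2 * m % 4 = 0 := by ring_nf; omega
  simp [legendreSymOnClass, hmod, Ne.symm hr]

theorem legendreSymOnClass_four_sq_mul_of_odd {r k : ℕ} (hk : Odd k) (m : ℕ) :
    legendreSymOnClass p 4 r (k ^ 2 * m) =
      legendreSym p (k ^ 2) * legendreSymOnClass p 4 r m := by
  obtain ⟨j, rfl⟩ := hk
  have hmod : (2 * j + 1) ^ 2 * m % 4 = m % 4 := by ring_nf; omega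
  simp only [legendreSymOnClass, hmod, mul_ite, mul_zero]
  push_cast
  rw [legendreSym.mul]

theorem abs_sum_Icc_legendreSymOnClass_four_sq_mul_le (hp : p ≠ 2) {r : ℕ} (hr₀ : r ≠ 0)
    (hr : r < 4) (k A B : ℕ) :
    |∑ m ∈ Icc A B, legendreSymOnClass p 4 r (k ^ 2 * m)| ≤ 4 * p := by
  rcases Nat.even_or_odd k with hk | hk
  · simp [legendreSymOnClass_four_sq_mul_of_even hr₀ hk]
  · have h4 : ((4 : ℕ) : ZMod p) ≠ 0 := by
      rw [Nat.cast_ofNat, show (4 : ZMod p) = 2 ^ 2 by norm_num]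
      exact pow_ne_zero 2 (Ring.two_ne_zero (by rwa [ZMod.ringChar_zmod_n]))
    rw [← Ico_add_one_right_eq_Icc]
    simp only [legendreSymOnClass_four_sq_mul_of_odd hk]
    rw [← mul_sum, abs_mul]
    calc _ ≤ 1 * (4 * (p : ℤ)) := by
          gcongr
          · exact legendreSym.abs_le_one p _
          · exact_mod_cast abs_sum_Ico_legendreSymOnClass_le hp h4 hr _ _
      _ = 4 * p := one_mul _

theorem isFundamentalDiscriminant_neg_natCast_iff (D : ℕ) :
    IsFundamentalDiscriminant (-D) ↔ (Squarefree D ∧ D % 4 = 3) ∨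
      (4 ∣ D ∧ Squarefree (D / 4) ∧ (D / 4 % 4 = 1 ∨ D / 4 % 4 = 2)) := by
  have hsq (n : ℕ) : Squarefree (-(n : ℤ)) ↔ Squarefree n := by
    rw [← Int.squarefree_natAbs, Int.natAbs_neg, Int.natAbs_natCast]
  constructor
  · rintro (⟨h, hmod⟩ | ⟨d, hd, h, hmod⟩)
    · exact Or.inl ⟨(hsq D).mp h, by omega⟩
    · obtain rfl : d = -((D / 4 : ℕ) : ℤ) := by omega
      exact Or.inr ⟨by omega, (hsq _).mp h, by omega⟩
  · rintro (⟨h, hmod⟩ | ⟨h4, h, hmod⟩)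
    · exact Or.inl ⟨(hsq D).mpr h, by omega⟩
    · exact Or.inr ⟨-((D / 4 : ℕ) : ℤ), by omega, (hsq _).mpr h, by omega⟩

open Classical in
theorem ite_isFundamentalDiscriminant_neg (hp : p ≠ 2) (D : ℕ) :
    (if IsFundamentalDiscriminant (-D) then legendreSym p (-D) else 0) =
      legendreSym p (-1) * ((if Squarefree D then legendreSymOnClass p 4 3 D else 0) +
        if 4 ∣ D ∧ Squarefree (D / 4) then
          legendreSymOnClass p 4 1 (D / 4) + legendreSymOnClass p 4 2 (D / 4) else 0) := by
  rw [isFundamentalDiscriminant_neg_natCast_iff, neg_eq_neg_one_mul, legendreSym.mul]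
  by_cases h4 : 4 ∣ D
  · obtain ⟨e, rfl⟩ := h4
    have hleg : legendreSym p ((4 * e : ℕ) : ℤ) = legendreSym p e := by
      rw [Nat.cast_mul, legendreSym.mul, show ((4 : ℕ) : ℤ) = 2 ^ 2 by rfl,
        legendreSym.sq_one' p (by exact_mod_cast Ring.two_ne_zero (by rwa [ZMod.ringChar_zmod_n])),
        one_mul]
    have h3 : ¬4 * e % 4 = 3 := by omega
    simp only [legendreSymOnClass, Nat.mul_div_cancel_left e four_pos, hleg, h3, dvd_mul_right,
      true_and, and_false, false_or, if_false, ite_self, zero_add]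
    split_ifs <;> simp_all
  · simp only [legendreSymOnClass, h4, false_and, if_false, add_zero]
    split_ifs <;> simp_all

open Classical in
theorem abs_sum_Icc_legendreSym_fundamental_le (hp : p ≠ 2) {L : ℕ} (hL : 0 < L) (U : ℕ) :
    |∑ D ∈ Icc L U, if IsFundamentalDiscriminant (-D) then legendreSym p (-D) else 0| ≤
      12 * p * Nat.sqrt U := by
  have hclass {r : ℕ} (hr₀ : r ≠ 0) (hr : r < 4) (k : ℕ) (_ : 0 < k) (A B : ℕ) :
      |∑ m ∈ Icc A B, legendreSymOnClass p 4 r (k ^ 2 * m)| ≤ 4 * p :=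
    abs_sum_Icc_legendreSymOnClass_four_sq_mul_le hp hr₀ hr k A B
  have hreindex : ∑ D ∈ Icc L U, (if 4 ∣ D ∧ Squarefree (D / 4) then
        legendreSymOnClass p 4 1 (D / 4) + legendreSymOnClass p 4 2 (D / 4) else 0) =
      ∑ e ∈ Icc ((L + 4 - 1) / 4) (U / 4) with Squarefree e,
        (legendreSymOnClass p 4 1 e + legendreSymOnClass p 4 2 e) := by
    simp only [ite_and]
    rw [← sum_filter, sum_Icc_filter_dvd _ four_pos, sum_filter]
    simp only [Nat.mul_div_cancel_left _ four_pos]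
  have h3 := abs_sum_Icc_filter_squarefree_le (hclass (r := 3) (by norm_num) (by norm_num)) hL U
  have h12 := abs_sum_Icc_filter_squarefree_le
    (f := fun e ↦ legendreSymOnClass p 4 1 e + legendreSymOnClass p 4 2 e) (fun k hk A B ↦ by
      rw [sum_add_distrib]
      exact (abs_add_le _ _).trans (add_le_add (hclass (by norm_num) (by norm_num) k hk A B)
        (hclass (r := 2) (by norm_num) (by norm_num) k hk A B)))
    (L := (L + 4 - 1) / 4) (by omega) (U / 4)
  have hsqrt : (Nat.sqrt (U / 4) : ℤ) ≤ Nat.sqrt U := by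
    exact_mod_cast Nat.sqrt_le_sqrt (Nat.div_le_self U 4)
  rw [sum_congr rfl fun D _ ↦ ite_isFundamentalDiscriminant_neg hp D, ← mul_sum,
    sum_add_distrib, ← sum_filter, hreindex, abs_mul]
  calc _ ≤ (1 : ℤ) * (Nat.sqrt U * (4 * p) + Nat.sqrt U * (4 * p + 4 * p)) := by
        gcongr
        · exact legendreSym.abs_le_one p _
        · exact (abs_add_le _ _).trans (add_le_add h3 (h12.trans (by gcongr)))
    _ = 12 * p * Nat.sqrt U := by ring

end Legendre

open Classical in
/-- For any odd prime `p` and any real `X ≥ 1`, the sum of the Legendre symbol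
`(-D/p)` over all fundamental discriminants `-D` with `X ≤ D ≤ 2X` has absolute
value at most `32 p √X`. -/
theorem sum_legendre_fundamental_discriminants (p : ℕ) [Fact p.Prime] (hp : p ≠ 2)
    (X : ℝ) (hX : 1 ≤ X) :
    |∑ D ∈ Finset.Icc ⌈X⌉₊ ⌊2 * X⌋₊,
        (if IsFundamentalDiscriminant (-(D : ℤ)) then
          (legendreSym p (-(D : ℤ)) : ℝ) else 0)| ≤ 32 * p * Real.sqrt X := by
  have hsqrt : (Nat.sqrt ⌊2 * X⌋₊ : ℝ) ≤ 2 * Real.sqrt X :=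
    calc (Nat.sqrt ⌊2 * X⌋₊ : ℝ) ≤ Real.sqrt ⌊2 * X⌋₊ := Real.nat_sqrt_le_real_sqrt
      _ ≤ Real.sqrt (2 ^ 2 * X) :=
        Real.sqrt_le_sqrt (by nlinarith [Nat.floor_le (by linarith : 0 ≤ 2 * X)])
      _ = 2 * Real.sqrt X := by rw [Real.sqrt_mul' _ (by linarith), Real.sqrt_sq zero_le_two]
  have hbound := abs_sum_Icc_legendreSym_fundamental_le hp
    (Nat.ceil_pos.mpr (by linarith) : 0 < ⌈X⌉₊) ⌊2 * X⌋₊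
  calc _ = ((|∑ D ∈ Icc ⌈X⌉₊ ⌊2 * X⌋₊,
          if IsFundamentalDiscriminant (-D) then legendreSym p (-D) else 0| : ℤ) : ℝ) := by
        push_cast [apply_ite]
        rfl
    _ ≤ 12 * p * Nat.sqrt ⌊2 * X⌋₊ := by exact_mod_cast hbound
    _ ≤ 12 * p * (2 * Real.sqrt X) := by gcongr
    _ ≤ 32 * p * Real.sqrt X := by
        nlinarith [mul_nonneg (Nat.cast_nonneg p : (0 : ℝ) ≤ p) (Real.sqrt_nonneg X)]
end

section
/- For positive integers m and n with 3n - 1 ≤ m, the partial sum ∑_{l=0}^{n} C(m, l) is at most 2 C(m, n). -/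
/-!
For `k < n` we have `C(m, k + 1) / C(m, k) = (m - k) / (k + 1) ≥ 2`, because `m ≥ 3n - 1 ≥ 3k + 2`.
So the terms `C(m, 0), …, C(m, n)` at least double at each step, and the sum of such a sequence
is at most twice its last term.
-/

open Finset

theorem Finset.sum_range_succ_le_two_nsmul_of_two_nsmul_le {M : Type*} [AddCommMonoid M]
    [PartialOrder M] [IsOrderedAddMonoid M] [CanonicallyOrderedAdd M] {f : ℕ → M} {n : ℕ}
    (hf : ∀ k < n, 2 • f k ≤ f (k + 1)) : ∑ l ∈ range (n + 1), f l ≤ 2 • f n := by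
  induction n with
  | zero => simp [two_nsmul]
  | succ n ih =>
    calc ∑ l ∈ range (n + 2), f l = ∑ l ∈ range (n + 1), f l + f (n + 1) := sum_range_succ _ _
      _ ≤ 2 • f n + f (n + 1) := by gcongr; exact ih fun k hk => hf k (by omega)
      _ ≤ f (n + 1) + f (n + 1) := by gcongr; exact hf n n.lt_succ_self
      _ = 2 • f (n + 1) := (two_nsmul _).symm

theorem Nat.two_mul_choose_le_choose_succ {m k : ℕ} (h : 3 * k + 2 ≤ m) :
    2 * m.choose k ≤ m.choose (k + 1) := by
  refine Nat.le_of_mul_le_mul_right ?_ k.succ_pos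
  calc 2 * m.choose k * (k + 1) = m.choose k * (2 * (k + 1)) := by ring
    _ ≤ m.choose k * (m - k) := Nat.mul_le_mul_left _ (by omega)
    _ = m.choose (k + 1) * (k + 1) := (Nat.choose_succ_right_eq m k).symm

theorem sum_choose_le_two_choose_general (m n : ℕ)
    (h : 3 * n - 1 ≤ m) :
    ∑ l ∈ Finset.range (n + 1), m.choose l ≤ 2 * m.choose n :=
  Finset.sum_range_succ_le_two_nsmul_of_two_nsmul_le fun k hk =>
    Nat.two_mul_choose_le_choose_succ (by omega)

/-- For positive integers `m`, `n` with `3n - 1 ≤ m`,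
`∑_{l=0}^{n} C(m, l) ≤ 2 C(m, n)`. -/
theorem sum_choose_le_two_choose (m n : ℕ) (hn : 0 < n) (hm : 0 < m)
    (h : 3 * n - 1 ≤ m) :
    ∑ l ∈ Finset.range (n + 1), m.choose l ≤ 2 * m.choose n :=
  sum_choose_le_two_choose_general m n h
end

section
/- Let f be a nonnegative multiplicative function supported on squarefree integers with prime factors in a finite set P of primes. Then the ratio (∑_{m | n} f(m)f(n)/√(n/m)) / (∑_m f(m)^2) equals ∏_{p ∈ P} (1 + f(p)/(√p (1 + f(p)^2))), where sums range over P-supported squarefree integers. -/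
open ArithmeticFunction

lemma sum_div_prod_primes (g : ArithmeticFunction ℝ) (hg : g.IsMultiplicative)
    (P : Finset ℕ) (hP : ∀ p ∈ P, p.Prime) :
    ∑ d ∈ (∏ p ∈ P, p).divisors, g d = ∏ p ∈ P, (1 + g p) := by
  induction P using Finset.induction with
  | empty => simp [hg.map_one]
  | @insert p P hpP ih =>
    have hp := hP p (Finset.mem_insert_self p P)
    have hP' : ∀ q ∈ P, q.Prime := fun q hq => hP q (Finset.mem_insert_of_mem hq)
    have hcop : Nat.Coprime p (∏ q ∈ P, q) := by
      apply Nat.Coprime.prod_right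
      intro q hq
      exact (Nat.coprime_primes hp (hP' q hq)).2 (fun h => hpP (h ▸ hq))
    rw [Finset.prod_insert hpP, Finset.prod_insert hpP]
    have key : ∑ d ∈ (p * ∏ q ∈ P, q).divisors, g d
        = (∑ d ∈ p.divisors, g d) * ∑ d ∈ (∏ q ∈ P, q).divisors, g d := by
      have h1 := (coe_mul_zeta_apply (f := g) (x := p * ∏ q ∈ P, q))
      have h2 := (hg.mul isMultiplicative_zeta.natCast).map_mul_of_coprime hcop
      rw [← coe_mul_zeta_apply, h2, coe_mul_zeta_apply, coe_mul_zeta_apply]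
    rw [key, ih hP', Nat.Prime.divisors hp]
    rw [Finset.sum_insert (Finset.notMem_singleton.mpr (Ne.symm hp.ne_one)), Finset.sum_singleton, hg.map_one]

/-- Let `f` be a nonnegative multiplicative function supported on squarefree
integers with prime factors in a finite set `P` of primes.  Then
`(∑_{m ∣ n} f(m)f(n)/√(n/m)) / (∑_m f(m)²) = ∏_{p ∈ P} (1 + f(p)/(√p (1 + f(p)²)))`,
where the sums range over `P`-supported squarefree integers. -/
theorem resonator_ratio_eq_prod (P : Finset ℕ) (hP : ∀ p ∈ P, p.Prime)
    (f : ℕ → ℝ) (hf1 : f 1 = 1)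
    (hmul : ∀ a b : ℕ, Nat.Coprime a b → f (a * b) = f a * f b)
    (hsupp : ∀ n : ℕ, ¬ n ∣ ∏ p ∈ P, p → f n = 0)
    (hnn : ∀ p ∈ P, 0 ≤ f p) :
    (∑ n ∈ (∏ p ∈ P, p).divisors, ∑ m ∈ n.divisors,
        f m * f n / Real.sqrt ((n / m : ℕ))) /
      (∑ m ∈ (∏ p ∈ P, p).divisors, f m ^ 2) =
      ∏ p ∈ P, (1 + f p / (Real.sqrt p * (1 + f p ^ 2))) := by
  have hNne : (∏ p ∈ P, p) ≠ 0 := Finset.prod_ne_zero_iff.2 fun p hp => (hP p hp).ne_zero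
  have hf0 : f 0 = 0 := hsupp 0 (by simpa [Nat.zero_dvd] using hNne)
  set F : ArithmeticFunction ℝ := ⟨f, hf0⟩ with hF
  have hFm : F.IsMultiplicative := ⟨hf1, fun h => hmul _ _ h⟩
  set G : ArithmeticFunction ℝ := ⟨fun n => (Real.sqrt n)⁻¹, by simp⟩ with hG
  have hGm : G.IsMultiplicative := by
    constructor
    · simp [hG]
    · intro a b _
      show (Real.sqrt ((a * b : ℕ) : ℝ))⁻¹ = (Real.sqrt a)⁻¹ * (Real.sqrt b)⁻¹
      push_cast
      rw [Real.sqrt_mul (Nat.cast_nonneg a), mul_inv]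
  -- numerator function
  set H : ArithmeticFunction ℝ := ArithmeticFunction.pmul F (F * G) with hH
  have hHm : H.IsMultiplicative := hFm.pmul (hFm.mul hGm)
  -- denominator function
  set D : ArithmeticFunction ℝ := ArithmeticFunction.pmul F F with hD
  have hDm : D.IsMultiplicative := hFm.pmul hFm
  have hnum : (∑ n ∈ (∏ p ∈ P, p).divisors, ∑ m ∈ n.divisors,
      f m * f n / Real.sqrt ((n / m : ℕ))) = ∑ n ∈ (∏ p ∈ P, p).divisors, H n := by
    refine Finset.sum_congr rfl fun n hn => ?_
    rw [hH, ArithmeticFunction.pmul_apply, ArithmeticFunction.mul_apply,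
      Nat.sum_divisorsAntidiagonal (f := fun m k => F m * G k)]
    rw [Finset.mul_sum]
    refine Finset.sum_congr rfl fun m hm => ?_
    show f m * f n / Real.sqrt ((n / m : ℕ)) = f n * (f m * (Real.sqrt ((n / m : ℕ)))⁻¹)
    ring
  have hden : (∑ m ∈ (∏ p ∈ P, p).divisors, f m ^ 2)
      = ∑ m ∈ (∏ p ∈ P, p).divisors, D m := by
    refine Finset.sum_congr rfl fun m _ => ?_
    show f m ^ 2 = f m * f m
    ring
  rw [hnum, hden, sum_div_prod_primes H hHm P hP, sum_div_prod_primes D hDm P hP]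
  have hHp : ∀ p ∈ P, (1 : ℝ) + H p = 1 + f p ^ 2 + f p * (Real.sqrt p)⁻¹ := by
    intro p hp
    have hpp := hP p hp
    rw [hH, ArithmeticFunction.pmul_apply, ArithmeticFunction.mul_apply,
      Nat.sum_divisorsAntidiagonal (f := fun m k => F m * G k), Nat.Prime.divisors hpp,
      Finset.sum_insert (Finset.notMem_singleton.mpr (Ne.symm hpp.ne_one)), Finset.sum_singleton]
    show (1:ℝ) + f p * (f 1 * (Real.sqrt ((p/1 : ℕ)))⁻¹ + f p * (Real.sqrt ((p/p : ℕ)))⁻¹)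
      = 1 + f p ^ 2 + f p * (Real.sqrt p)⁻¹
    rw [Nat.div_one, Nat.div_self hpp.pos, hf1]
    simp
    ring
  have hDp : ∀ p ∈ P, (1 : ℝ) + D p = 1 + f p ^ 2 := by
    intro p _
    show (1:ℝ) + f p * f p = 1 + f p ^ 2
    ring
  rw [Finset.prod_congr rfl hHp, Finset.prod_congr rfl hDp, ← Finset.prod_div_distrib]
  refine Finset.prod_congr rfl fun p hp => ?_
  have hpp := hP p hp
  have hs : (0:ℝ) < Real.sqrt p := Real.sqrt_pos.2 (by exact_mod_cast hpp.pos)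
  have hd : (0:ℝ) < 1 + f p ^ 2 := by positivity
  field_simp
end
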